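/- arXiv:1703.04427 — 2 statements merged into one kernel-verified Lean document; each statement's English description precedes it below -/
import Mathlib

section
/- For every k ≥ 1, the vector (2, 4, k, 1) is not 0-realizable, and the vector (2, 5, 2, 1) is not 0-realizable: no tp0 cop-win graph has either as its rank cardinality vector. -/
namespace CopsRobbers

variable {V : Type*}

/-- The closed neighborhood of `v` within the vertex set `S` (graphs are reflexive,
so `v` itself belongs to its closed neighborhood). -/
def closedNbhd (G : SimpleGraph V) (S : Set V) (v : V) : Set V :=
  {u | u ∈ S ∧ (u = v ∨ G.Adj u v)}

/-- `v` is a strict corner of the subgraph induced on `S`: some other vertex `w ∈ S`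
strictly corners `v`, i.e. `N[v] ⊊ N[w]` within `S`. -/
def StrictCorner (G : SimpleGraph V) (S : Set V) (v : V) : Prop :=
  v ∈ S ∧ ∃ w ∈ S, w ≠ v ∧ closedNbhd G S v ⊂ closedNbhd G S w

/-- The remaining vertex sets of the corner ranking procedure (0-indexed auxiliary
version): at each step all current strict corners are removed. -/
def stageAux (G : SimpleGraph V) : ℕ → Set V
  | 0 => Set.univ
  | n + 1 => stageAux G n \ {v | StrictCorner G (stageAux G n) v}

/-- `stage G k` is the vertex set of `G^(k)` (for `k ≥ 1`), so `stage G 1 = V(G)`. -/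
def stage (G : SimpleGraph V) (k : ℕ) : Set V := stageAux G (k - 1)

/-- The corner rank of a vertex: the least `k ≥ 1` such that `v` is a strict corner
of `G^(k)`, or `G^(k)` is a clique still containing `v`; and `⊤` (that is, `∞`) if
there is no such `k`. -/
noncomputable def cornerRank (G : SimpleGraph V) (v : V) : ℕ∞ :=
  sInf {k : ℕ∞ | ∃ n : ℕ, k = (n : ℕ∞) ∧ 1 ≤ n ∧
    (StrictCorner G (stage G n) v ∨ (G.IsClique (stage G n) ∧ v ∈ stage G n))}

/-- The corner rank of a graph: the largest corner rank of a vertex. -/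
noncomputable def graphRank (G : SimpleGraph V) : ℕ∞ := ⨆ v, cornerRank G v

/-- A graph is cop-win iff every vertex has finite corner rank. -/
def CopWin (G : SimpleGraph V) : Prop := ∀ v, cornerRank G v ≠ ⊤

/-- `v` dominates the set `S`: `v` is (reflexively) adjacent to every vertex of `S`. -/
def Dominates (G : SimpleGraph V) (v : V) (S : Set V) : Prop :=
  ∀ u ∈ S, u = v ∨ G.Adj v u

/-- A cop-win graph of corner rank `α ≥ 2` is `tp1` if some vertex of corner rank `α`
dominates the vertex set of `G^(α-1)`. -/
def Tp1 (G : SimpleGraph V) : Prop :=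
  ∃ α : ℕ, 2 ≤ α ∧ graphRank G = (α : ℕ∞) ∧
    ∃ v, cornerRank G v = (α : ℕ∞) ∧ Dominates G v (stage G (α - 1))

/-- `G` realizes the vector `(x_α, …, x_1)` (written as the list `[x_α, …, x_1]`):
`G` is cop-win of corner rank `α` and for each `k`, `x_k` is the number of vertices
of corner rank `k`. -/
def Realizes (G : SimpleGraph V) (x : List ℕ) : Prop :=
  CopWin G ∧ graphRank G = (x.length : ℕ∞) ∧
  ∀ i : Fin x.length,
    x.get i = {v | cornerRank G v = ((x.length - (i : ℕ) : ℕ) : ℕ∞)}.ncard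

/-- `G` r-realizes `x` (for `r ∈ {0,1}`): `G` realizes `x` and `G` is tp-r. -/
def RRealizes (G : SimpleGraph V) (r : ℕ) (x : List ℕ) : Prop :=
  Realizes G x ∧ (Tp1 G ↔ r = 1)

/-- A vector is realizable if it is the rank cardinality vector of some finite cop-win graph. -/
def Realizable (x : List ℕ) : Prop :=
  ∃ (W : Type) (_ : Fintype W) (G : SimpleGraph W), Realizes G x

/-- A vector is r-realizable if some finite tp-r cop-win graph realizes it. -/
def RRealizable (r : ℕ) (x : List ℕ) : Prop :=
  ∃ (W : Type) (_ : Fintype W) (G : SimpleGraph W), RRealizes G r x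

open Classical in
/-- The capture time of a cop-win graph: `cr(G) - r(G)`. -/
noncomputable def captureTime (G : SimpleGraph V) : ℕ :=
  (graphRank G).toNat - (if Tp1 G then 1 else 0)

end CopsRobbers

/-!
Let `G` be a tp0 graph with rank cardinality vector `(2, x₃, x₂, 1)`, `X₄ = {a, b}`, `X₁ = {u}`.
In `G^(3)` every closed neighbourhood lies inside `N[a]` or `N[b]`, and since `G` is tp0 there are
vertices `q ∉ N[b]` and `p ∉ N[a]`. A strict domination in `G^(3)` that did not exist in `G^(2)`
is destroyed there by a vertex of `X₂`; every vertex of `X₂` is dominated in `G^(2)` by a vertex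
of `G^(3)`; and all of `X₂` is adjacent to `u`, hence to a common vertex `r` of `G^(3)`. Chasing
these dominations from `q`, `p` and `r` yields five distinct vertices of `X₃`, and when there are
only five, three distinct vertices of `X₂`.
-/

namespace CopsRobbers

variable {V : Type*} {G : SimpleGraph V} {S T : Set V} {u v w : V}

lemma self_mem_closedNbhd (hv : v ∈ S) : v ∈ closedNbhd G S v := ⟨hv, Or.inl rfl⟩

lemma mem_closedNbhd_of_adj (hu : u ∈ S) (h : G.Adj u v) : u ∈ closedNbhd G S v :=
  ⟨hu, Or.inr h⟩

lemma adj_of_mem_closedNbhd (h : u ∈ closedNbhd G S v) (hne : u ≠ v) : G.Adj u v :=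
  h.2.resolve_left hne

lemma mem_closedNbhd_swap (hv : v ∈ S) (h : u ∈ closedNbhd G S v) : v ∈ closedNbhd G S u :=
  ⟨hv, h.2.imp Eq.symm SimpleGraph.Adj.symm⟩

lemma closedNbhd_diff : closedNbhd G (S \ T) v = closedNbhd G S v \ T := by
  ext x
  simp only [closedNbhd, Set.mem_sdiff, Set.mem_ofPred_eq]
  tauto

lemma exists_notMem_closedNbhd_of_not_dominates (h : ¬ Dominates G v S) :
    ∃ q ∈ S, q ∉ closedNbhd G S v := by
  simp only [Dominates, not_forall] at h
  obtain ⟨q, hq, hqv⟩ := h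
  exact ⟨q, hq, fun h' => hqv (h'.2.imp id SimpleGraph.Adj.symm)⟩

def corners (G : SimpleGraph V) (S : Set V) : Set V := {v | StrictCorner G S v}

lemma corners_subset : corners G S ⊆ S := fun _ h => h.1

lemma not_strictCorner_pair {a b : V} : ¬ StrictCorner G {a, b} v := by
  rintro ⟨hv, w, hw, hwv, hlt⟩
  have hvw : v ∈ closedNbhd G {a, b} w := hlt.subset (self_mem_closedNbhd hv)
  refine hlt.not_subset fun t ht => ?_
  have hpair : ∀ x ∈ ({a, b} : Set V), x = v ∨ x = w := by
    rcases Set.mem_insert_iff.mp hv with rfl | hv <;>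
      rcases Set.mem_insert_iff.mp hw with rfl | hw <;> simp_all
  rcases hpair t ht.1 with rfl | rfl
  · exact self_mem_closedNbhd hv
  · exact mem_closedNbhd_swap hw hvw

theorem StrictCorner.exists_not_strictCorner [Finite V] (hv : StrictCorner G S v) :
    ∃ w ∈ S, ¬ StrictCorner G S w ∧ closedNbhd G S v ⊂ closedNbhd G S w := by
  obtain ⟨-, w₀, hw₀, -, hlt₀⟩ := hv
  obtain ⟨w, ⟨hw, hlt⟩, hmax⟩ := Set.Finite.exists_maximalFor (closedNbhd G S)
    {w | w ∈ S ∧ closedNbhd G S v ⊂ closedNbhd G S w} (Set.toFinite _)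
    ⟨w₀, hw₀, hlt₀⟩
  refine ⟨w, hw, ?_, hlt⟩
  rintro ⟨-, w', hw', -, hlt'⟩
  exact hlt'.not_subset (hmax ⟨hw', hlt.trans hlt'⟩ hlt'.subset)

theorem exists_not_strictCorner_closedNbhd_subset [Finite V] (hv : v ∈ S) :
    ∃ w ∈ S, ¬ StrictCorner G S w ∧ closedNbhd G S v ⊆ closedNbhd G S w := by
  by_cases hc : StrictCorner G S v
  · obtain ⟨w, hw, hnc, hlt⟩ := hc.exists_not_strictCorner
    exact ⟨w, hw, hnc, hlt.subset⟩
  · exact ⟨v, hv, hc, subset_rfl⟩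

theorem exists_mem_closedNbhd_notMem_of_diff (hvS : v ∈ S) (hwS : w ∈ S)
    (hv : ¬ StrictCorner G S v)
    (hlt : closedNbhd G (S \ T) v ⊂ closedNbhd G (S \ T) w) :
    ∃ t ∈ T, t ∈ closedNbhd G S v ∧ t ∉ closedNbhd G S w := by
  by_contra! hT
  rw [closedNbhd_diff, closedNbhd_diff] at hlt
  obtain ⟨t, ⟨htw, htT⟩, htv⟩ := Set.exists_of_ssubset hlt
  refine hv ⟨hvS, w, hwS, ?_, ?_⟩
  · rintro rfl
    exact hlt.ne rfl
  refine ssubset_iff_subset_not_subset.2 ⟨fun x hx => ?_, fun h => htv ⟨h htw, htT⟩⟩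
  by_cases hxT : x ∈ T
  · exact hT x hxT hx
  · exact (hlt.subset ⟨hx, hxT⟩).1

variable {m n : ℕ}

/-- `cornerRank G v` is the least `n ≥ 1` with `RankedAt G n v`. -/
def RankedAt (G : SimpleGraph V) (n : ℕ) (v : V) : Prop :=
  StrictCorner G (stage G n) v ∨ (G.IsClique (stage G n) ∧ v ∈ stage G n)

lemma stage_succ (hn : 1 ≤ n) : stage G (n + 1) = stage G n \ corners G (stage G n) := by
  obtain ⟨n, rfl⟩ := Nat.exists_eq_add_of_le' hn
  rfl

lemma mem_stage_iff (hn : 1 ≤ n) :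
    v ∈ stage G n ↔ ∀ m, 1 ≤ m → m < n → ¬ StrictCorner G (stage G m) v := by
  induction n, hn using Nat.le_induction with
  | base => exact ⟨fun _ m hm hm1 => absurd hm1 (by omega), fun _ => trivial⟩
  | succ n hn ih =>
    rw [stage_succ hn, Set.mem_sdiff, ih]
    refine ⟨fun ⟨h, hc⟩ m hm hmn => ?_,
      fun h => ⟨fun m hm hmn => h m hm (by omega), h n hn (by omega)⟩⟩
    rcases Nat.lt_succ_iff_lt_or_eq.mp hmn with hmn | rfl
    exacts [h m hm hmn, hc]

lemma cornerRank_eq_of_rankedAt (hn : 1 ≤ n) (hv : RankedAt G n v)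
    (hmin : ∀ m, 1 ≤ m → m < n → ¬ RankedAt G m v) : cornerRank G v = n := by
  refine le_antisymm (sInf_le ⟨n, rfl, hn, hv⟩) (le_sInf ?_)
  rintro _ ⟨m, rfl, hm, hmv⟩
  by_contra! hlt
  exact hmin m hm (by exact_mod_cast hlt) hmv

lemma cornerRank_eq_iff :
    cornerRank G v = n ↔
      1 ≤ n ∧ RankedAt G n v ∧ ∀ m, 1 ≤ m → m < n → ¬ RankedAt G m v := by
  refine ⟨fun h => ?_, fun ⟨hn, hv, hmin⟩ => cornerRank_eq_of_rankedAt hn hv hmin⟩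
  set P := {m : ℕ | 1 ≤ m ∧ RankedAt G m v}
  obtain ⟨m₀, hm₀⟩ : P.Nonempty := by
    by_contra hP
    refine ENat.natCast_ne_top n (h.symm.trans (sInf_eq_top.2 ?_))
    rintro _ ⟨m, rfl, hm, hmv⟩
    exact (hP ⟨m, hm, hmv⟩).elim
  have hmem : sInf P ∈ P := Nat.sInf_mem ⟨m₀, hm₀⟩
  have hmin : ∀ m, 1 ≤ m → m < sInf P → ¬ RankedAt G m v :=
    fun m hm hlt hmv => (Nat.sInf_le (show m ∈ P from ⟨hm, hmv⟩)).not_gt hlt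
  obtain rfl : sInf P = n := by
    exact_mod_cast (cornerRank_eq_of_rankedAt hmem.1 hmem.2 hmin).symm.trans h
  exact ⟨hmem.1, hmem.2, hmin⟩

lemma mem_stage_of_cornerRank_eq (h : cornerRank G v = n) (hm : 1 ≤ m) (hmn : m ≤ n) :
    v ∈ stage G m := by
  obtain ⟨-, -, hmin⟩ := cornerRank_eq_iff.1 h
  exact (mem_stage_iff hm).2 fun l hl hlm hc => hmin l hl (by omega) (Or.inl hc)

lemma not_isClique_stage_of_cornerRank_eq (h : cornerRank G v = n) (hm : 1 ≤ m) (hmn : m < n) :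
    ¬ G.IsClique (stage G m) := fun hcl =>
  (cornerRank_eq_iff.1 h).2.2 m hm hmn (Or.inr ⟨hcl, mem_stage_of_cornerRank_eq h hm hmn.le⟩)

lemma corners_stage_eq_setOf_cornerRank_eq (hn : 1 ≤ n)
    (hcl : ∀ m, 1 ≤ m → m ≤ n → ¬ G.IsClique (stage G m)) :
    corners G (stage G n) = {v | cornerRank G v = n} := by
  ext v
  refine ⟨fun hv => cornerRank_eq_of_rankedAt hn (Or.inl hv) fun m hm hmn hmv => ?_,
    fun hv => ((cornerRank_eq_iff.1 hv).2.1).resolve_right fun h => hcl n hn le_rfl h.1⟩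
  rcases hmv with hc | h
  · exact (mem_stage_iff hn).1 hv.1 m hm hmn hc
  · exact hcl m hm hmn.le h.1

lemma stage_eq_setOf_cornerRank_eq {a : V} (hG : CopWin G) (hle : ∀ v, cornerRank G v ≤ n)
    (ha : cornerRank G a = n) : stage G n = {v | cornerRank G v = n} := by
  have hn : 1 ≤ n := (cornerRank_eq_iff.1 ha).1
  refine Set.Subset.antisymm (fun v hv => ?_) fun v hv => mem_stage_of_cornerRank_eq hv hn le_rfl
  obtain ⟨m, hm⟩ := ENat.ne_top_iff_exists.1 (hG v)
  obtain ⟨hm1, hmv, -⟩ := cornerRank_eq_iff.1 hm.symm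
  have hmn : m ≤ n := by exact_mod_cast hm.trans_le (hle v)
  rcases hmn.lt_or_eq with hlt | rfl
  · rcases hmv with hc | hcl
    · exact absurd hc ((mem_stage_iff hn).1 hv m hm1 hlt)
    · exact absurd hcl.1 (not_isClique_stage_of_cornerRank_eq ha hm1 hlt)
  · exact hm.symm

lemma adj_of_stage_eq_pair {a b : V} (ha : cornerRank G a = n) (hab : a ≠ b)
    (hS : stage G n = {a, b}) : G.Adj a b := by
  rcases (cornerRank_eq_iff.1 ha).2.1 with hc | hcl
  · exact absurd (hS ▸ hc) not_strictCorner_pair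
  · exact hcl.1 (hS ▸ by simp) (hS ▸ by simp) hab

lemma exists_adj_not_adj_of_closedNbhd_ssubset {x y : V} (hn : 1 ≤ n)
    (hx : x ∈ stage G (n + 1)) (hy : y ∈ stage G (n + 1))
    (hlt : closedNbhd G (stage G (n + 1)) x ⊂ closedNbhd G (stage G (n + 1)) y) :
    ∃ z ∈ corners G (stage G n), G.Adj z x ∧ ¬ G.Adj z y := by
  rw [stage_succ hn] at hx hy hlt
  obtain ⟨z, hz, hzx, hzy⟩ := exists_mem_closedNbhd_notMem_of_diff hx.1 hy.1 hx.2 hlt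
  refine ⟨z, hz, adj_of_mem_closedNbhd hzx fun h => hx.2 (h ▸ hz), fun h => hzy ?_⟩
  exact mem_closedNbhd_of_adj (corners_subset hz) h

lemma exists_mem_stage_succ_closedNbhd_ssubset [Finite V] (hn : 1 ≤ n)
    (hv : v ∈ corners G (stage G n)) :
    ∃ w ∈ stage G (n + 1), closedNbhd G (stage G n) v ⊂ closedNbhd G (stage G n) w := by
  obtain ⟨w, hw, hwc, hlt⟩ := StrictCorner.exists_not_strictCorner hv
  exact ⟨w, stage_succ hn ▸ ⟨hw, hwc⟩, hlt⟩

/-- The situation in `G^(3)` (vertex set `S`) of a graph with rank cardinality vector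
`(2, x₃, x₂, 1)`: `X₄ = {a, b}`, `T = X₂`, and `r` is a vertex adjacent to all of `X₂`. -/
structure ApexConfig (G : SimpleGraph V) (S T : Set V) (a b r : V) : Prop where
  a_mem : a ∈ S
  b_mem : b ∈ S
  adj : G.Adj a b
  cover : ∀ x ∈ S,
    closedNbhd G S x ⊆ closedNbhd G S a ∨ closedNbhd G S x ⊆ closedNbhd G S b
  breaks : ∀ x ∈ S, ∀ y ∈ S, closedNbhd G S x ⊂ closedNbhd G S y →
    ∃ z ∈ T, G.Adj z x ∧ ¬ G.Adj z y
  dominated : ∀ z ∈ T, ∃ w ∈ S, G.Adj z w ∧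
    ∀ y ∈ S, G.Adj z y → y ∈ closedNbhd G S w
  r_mem : r ∈ S
  adj_r : ∀ z ∈ T, G.Adj z r

namespace ApexConfig

variable {a b r p q : V}

lemma swap (h : ApexConfig G S T a b r) : ApexConfig G S T b a r :=
  ⟨h.b_mem, h.a_mem, h.adj.symm, fun x hx => (h.cover x hx).symm, h.breaks, h.dominated,
    h.r_mem, h.adj_r⟩

lemma mem_sdiff_of_notMem (h : ApexConfig G S T a b r) (hq : q ∈ S)
    (hqb : q ∉ closedNbhd G S b) : q ∈ S \ {a, b} := by
  refine ⟨hq, ?_⟩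
  rintro (rfl | rfl)
  exacts [hqb (mem_closedNbhd_of_adj h.a_mem h.adj), hqb (self_mem_closedNbhd h.b_mem)]

lemma closedNbhd_subset_of_mem (h : ApexConfig G S T a b r) {x : V}
    (hqb : q ∉ closedNbhd G S b) (hx : x ∈ S) (hqx : q ∈ closedNbhd G S x) :
    closedNbhd G S x ⊆ closedNbhd G S a :=
  (h.cover x hx).resolve_right fun hxb => hqb (hxb hqx)

lemma not_adj_of_adj (h : ApexConfig G S T a b r) {z : V} (hq : q ∈ S)
    (hqb : q ∉ closedNbhd G S b) (hp : p ∈ S) (hpa : p ∉ closedNbhd G S a) (hz : z ∈ T)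
    (hzq : G.Adj z q) : ¬ G.Adj z p := fun hzp => by
  obtain ⟨w, hw, -, hwN⟩ := h.dominated z hz
  exact hpa (h.closedNbhd_subset_of_mem hqb hw (hwN q hq hzq) (hwN p hp hzp))

/-- `z ∈ X₂` witnesses `N[q] ⊈ N[a]` in `G^(2)`, and `w ∈ G^(3)` dominates `z` in `G^(2)`. -/
lemma exists_breaker (h : ApexConfig G S T a b r) (hq : q ∈ S) (hqb : q ∉ closedNbhd G S b) :
    ∃ z ∈ T, ∃ w ∈ S, G.Adj z q ∧ ¬ G.Adj z a ∧ G.Adj z w ∧ q ∈ closedNbhd G S w ∧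
      r ∈ closedNbhd G S w ∧ closedNbhd G S w ⊆ closedNbhd G S a := by
  have hlt : closedNbhd G S q ⊂ closedNbhd G S a :=
    (Set.ssubset_iff_of_subset (h.closedNbhd_subset_of_mem hqb hq (self_mem_closedNbhd hq))).2
      ⟨b, mem_closedNbhd_of_adj h.b_mem h.adj.symm, fun hb => hqb (mem_closedNbhd_swap hq hb)⟩
  obtain ⟨z, hz, hzq, hza⟩ := h.breaks q hq a h.a_mem hlt
  obtain ⟨w, hw, hzw, hwN⟩ := h.dominated z hz
  have hqw : q ∈ closedNbhd G S w := hwN q hq hzq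
  exact ⟨z, hz, w, hw, hzq, hza, hzw, hqw, hwN r h.r_mem (h.adj_r z hz),
    h.closedNbhd_subset_of_mem hqb hw hqw⟩

lemma exists_mem_sdiff_closedNbhd_subset (h : ApexConfig G S T a b r) (hq : q ∈ S)
    (hqb : q ∉ closedNbhd G S b) (hrb : r ∈ closedNbhd G S b) :
    ∃ x ∈ S \ {a, b}, x ≠ q ∧ x ≠ r ∧ closedNbhd G S x ⊆ closedNbhd G S a := by
  obtain ⟨z, -, w, hw, -, hza, hzw, hqw, hrw, hwa⟩ := h.exists_breaker hq hqb
  have hbq : b ∉ closedNbhd G S q := fun hb => hqb (mem_closedNbhd_swap hq hb)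
  by_cases hrq : r ∈ closedNbhd G S q
  · have hqr : ¬ closedNbhd G S q ⊆ closedNbhd G S r := fun hsub => by
      obtain ⟨z, hz, -, hzr⟩ := h.breaks q hq r h.r_mem <| (Set.ssubset_iff_of_subset hsub).2
        ⟨b, mem_closedNbhd_swap h.b_mem hrb, hbq⟩
      exact hzr (h.adj_r z hz)
    obtain ⟨x, hxq, hxr⟩ := Set.not_subset.1 hqr
    refine ⟨x, ⟨hxq.1, ?_⟩, ?_, ?_,
      h.closedNbhd_subset_of_mem hqb hxq.1 (mem_closedNbhd_swap hq hxq)⟩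
    · rintro (rfl | rfl)
      exacts [hxr (mem_closedNbhd_swap h.a_mem (hwa hrw)), hbq hxq]
    · rintro rfl
      exact hxr (mem_closedNbhd_swap hxq.1 hrq)
    · rintro rfl
      exact hxr (self_mem_closedNbhd h.r_mem)
  · refine ⟨w, ⟨hw, ?_⟩, ?_, ?_, hwa⟩
    · rintro (rfl | rfl)
      exacts [hza hzw, hqb hqw]
    · rintro rfl
      exact hrq hrw
    · rintro rfl
      exact hrq (mem_closedNbhd_swap hw hqw)

lemma three_le_ncard [Finite V] (h : ApexConfig G S T a b r) (hq : q ∈ S)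
    (hqb : q ∉ closedNbhd G S b) (hp : p ∈ S) (hpa : p ∉ closedNbhd G S a)
    (hra : closedNbhd G S r ⊆ closedNbhd G S a) {z w : V} (hz : z ∈ T) (hzp : G.Adj z p)
    (hzw : G.Adj z w) (hw : w ∈ S) (hpw : p ∈ closedNbhd G S w) (hrw : r ∈ closedNbhd G S w)
    (hbw : b ∈ closedNbhd G S w)
    (hS : ∀ y ∈ S, y ∉ ({b, p, w} : Set V) → closedNbhd G S y ⊆ closedNbhd G S a) :
    3 ≤ T.ncard := by
  obtain ⟨zq, hzq, -, -, hzqq, -⟩ := h.exists_breaker hq hqb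
  have hrp : r ∉ closedNbhd G S p := fun hr => hpa (hra (mem_closedNbhd_swap hp hr))
  have hlt : closedNbhd G S p ⊂ closedNbhd G S w := by
    refine (Set.ssubset_iff_of_subset fun y hy => ?_).2 ⟨r, hrw, hrp⟩
    by_cases hy' : y ∈ ({b, p, w} : Set V)
    · rcases hy' with rfl | rfl | rfl
      exacts [hbw, hpw, self_mem_closedNbhd hw]
    · exact absurd (hS y hy.1 hy' (mem_closedNbhd_swap hp hy)) hpa
  obtain ⟨z', hz', hz'p, hz'w⟩ := h.breaks p hp w hw hlt
  have hqz : zq ≠ z := fun e => h.not_adj_of_adj hq hqb hp hpa hzq hzqq (e ▸ hzp)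
  have hqz' : zq ≠ z' := fun e => h.not_adj_of_adj hq hqb hp hpa hzq hzqq (e ▸ hz'p)
  have hzz' : z ≠ z' := fun e => hz'w (e ▸ hzw)
  calc 3 = ({zq, z, z'} : Set V).ncard :=
        (Set.ncard_eq_three.2 ⟨_, _, _, hqz, hqz', hzz', rfl⟩).symm
    _ ≤ T.ncard := Set.ncard_le_ncard (by simp [Set.insert_subset_iff, hzq, hz, hz'])

lemma five_le_and_three_le_of_subset [Finite V] (h : ApexConfig G S T a b r) (hq : q ∈ S)
    (hqb : q ∉ closedNbhd G S b) (hp : p ∈ S) (hpa : p ∉ closedNbhd G S a)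
    (hra : closedNbhd G S r ⊆ closedNbhd G S a) :
    5 ≤ (S \ {a, b}).ncard ∧ ((S \ {a, b}).ncard ≤ 5 → 3 ≤ T.ncard) := by
  obtain ⟨zq, hzq, wq, -, -, hzqa, -, -, hrwq, hwqa⟩ := h.exists_breaker hq hqb
  obtain ⟨zp, hzp, wp, hwp, hzpp, hzpb, hzpw, hpwp, hrwp, hwpb⟩ := h.swap.exists_breaker hp hpa
  have hrb : r ∈ closedNbhd G S b := hwpb hrwp
  obtain ⟨x, hx, hxq, hxr, hxa⟩ := h.exists_mem_sdiff_closedNbhd_subset hq hqb hrb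
  set A := {y | closedNbhd G S y ⊆ closedNbhd G S a}
  have hA : {q, r, x} ⊆ A := by
    rintro _ (rfl | rfl | rfl)
    exacts [h.closedNbhd_subset_of_mem hqb hq (self_mem_closedNbhd hq), hra, hxa]
  have hAc : {p, wp} ⊆ Aᶜ := by
    rintro _ (rfl | rfl)
    exacts [fun hs => hpa (hs (self_mem_closedNbhd hp)), fun hs => hpa (hs hpwp)]
  have hD : {q, r, x} ∪ {p, wp} ⊆ S \ {a, b} := by
    have hr : r ∈ S \ {a, b} := ⟨h.r_mem, by
      rintro (rfl | rfl); exacts [hzqa (h.adj_r zq hzq), hzpb (h.adj_r zp hzp)]⟩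
    have hwp' : wp ∈ S \ {a, b} := ⟨hwp, by rintro (rfl | rfl); exacts [hpa hpwp, hzpb hzpw]⟩
    simp only [Set.union_subset_iff, Set.insert_subset_iff, Set.singleton_subset_iff]
    exact ⟨⟨h.mem_sdiff_of_notMem hq hqb, hr, hx⟩,
      Set.pair_comm a b ▸ h.swap.mem_sdiff_of_notMem hp hpa, hwp'⟩
  have hqr : q ≠ r := by rintro rfl; exact hqb hrb
  have hpwp' : p ≠ wp := by rintro rfl; exact hpa (hra (mem_closedNbhd_swap hp hrwp))
  have hcard : ({q, r, x} ∪ {p, wp} : Set V).ncard = 5 := by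
    rw [Set.ncard_union_eq ((disjoint_compl_right (a := A)).mono hA hAc),
      Set.ncard_eq_three.2 ⟨_, _, _, hqr, hxq.symm, hxr.symm, rfl⟩,
      Set.ncard_pair hpwp']
  refine ⟨hcard ▸ Set.ncard_le_ncard hD, fun hle => ?_⟩
  have hDeq := Set.eq_of_subset_of_ncard_le hD (hcard ▸ hle)
  refine h.three_le_ncard hq hqb hp hpa hra hzp hzpp hzpw hwp hpwp hrwp
    (mem_closedNbhd_swap h.b_mem (hwpb (self_mem_closedNbhd hwp))) fun y hy hyb => ?_
  by_cases hya : y = a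
  · exact hya ▸ subset_rfl
  have hyD : y ∈ ({q, r, x} ∪ {p, wp} : Set V) := by
    rw [hDeq]
    exact ⟨hy, by rintro (rfl | rfl); exacts [hya rfl, hyb (Or.inl rfl)]⟩
  rcases hyD with hy' | hy'
  · exact hA hy'
  · exact absurd (Or.inr hy') hyb

theorem five_le_and_three_le [Finite V] (h : ApexConfig G S T a b r) (hq : q ∈ S)
    (hqb : q ∉ closedNbhd G S b) (hp : p ∈ S) (hpa : p ∉ closedNbhd G S a) :
    5 ≤ (S \ {a, b}).ncard ∧ ((S \ {a, b}).ncard ≤ 5 → 3 ≤ T.ncard) := by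
  rcases h.cover r h.r_mem with hra | hrb
  · exact h.five_le_and_three_le_of_subset hq hqb hp hpa hra
  · simpa only [Set.pair_comm] using h.swap.five_le_and_three_le_of_subset hp hpa hq hqb hrb

end ApexConfig

lemma exists_mem_stage_three_forall_adj [Finite V] (hu : corners G (stage G 1) = {u}) :
    ∃ r ∈ stage G 3, ∀ z ∈ corners G (stage G 2), G.Adj z r := by
  have hS2 : stage G 2 = stage G 1 \ {u} := hu ▸ stage_succ le_rfl
  have hS3 : stage G 3 = stage G 2 \ corners G (stage G 2) := stage_succ (by norm_num)
  have huz : ∀ z ∈ corners G (stage G 2), G.Adj u z := by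
    intro z hz
    obtain ⟨w, hw, hlt⟩ := exists_mem_stage_succ_closedNbhd_ssubset (n := 2) (by norm_num) hz
    have hz2 : z ∈ stage G 2 := hz.1
    rw [hS2] at hz2 hlt
    obtain ⟨t, rfl, htz, -⟩ := exists_mem_closedNbhd_notMem_of_diff hz2.1 (Set.mem_univ w)
      (fun hc => hz2.2 (hu ▸ hc)) hlt
    refine adj_of_mem_closedNbhd htz ?_
    rintro rfl
    exact hz2.2 rfl
  obtain ⟨w, -, hwc, huw⟩ :=
    exists_not_strictCorner_closedNbhd_subset (G := G) (Set.mem_univ u : u ∈ stage G 1)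
  have hw2 : w ∈ stage G 2 := (stage_succ le_rfl).symm ▸ ⟨Set.mem_univ w, hwc⟩
  obtain ⟨r, hr2, hrc, hwr⟩ := exists_not_strictCorner_closedNbhd_subset hw2
  have hr3 : r ∈ stage G 3 := hS3 ▸ ⟨hr2, hrc⟩
  refine ⟨r, hr3, fun z hz => adj_of_mem_closedNbhd (hwr ⟨hz.1, ?_⟩) fun e => ?_⟩
  · exact (huw (mem_closedNbhd_of_adj (Set.mem_univ z) (huz z hz).symm)).2
  · exact (hS3 ▸ hr3).2 (e ▸ hz)

lemma exists_apexConfig [Finite V] {a b : V} (hu : corners G (stage G 1) = {u})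
    (hS4 : stage G 4 = {a, b}) (hab : G.Adj a b) :
    ∃ r, ApexConfig G (stage G 3) (corners G (stage G 2)) a b r := by
  have hS3 : stage G 3 = stage G 2 \ corners G (stage G 2) := stage_succ (by norm_num)
  have hS4' : stage G 4 = stage G 3 \ corners G (stage G 3) := stage_succ (by norm_num)
  have ha : a ∈ stage G 3 := (hS4' ▸ hS4.symm ▸ Set.mem_insert a ({b} : Set V)).1
  have hb : b ∈ stage G 3 :=
    (hS4' ▸ hS4.symm ▸ Set.mem_insert_of_mem a (Set.mem_singleton b)).1
  obtain ⟨r, hr, hrX⟩ := exists_mem_stage_three_forall_adj hu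
  refine ⟨r, ha, hb, hab, fun x hx => ?_, fun x hx y hy hlt => ?_, fun z hz => ?_, hr, hrX⟩
  · obtain ⟨w, hw, hwc, hxw⟩ := exists_not_strictCorner_closedNbhd_subset hx
    have hw4 : w ∈ ({a, b} : Set V) := hS4 ▸ hS4' ▸ ⟨hw, hwc⟩
    rcases hw4 with rfl | rfl
    exacts [Or.inl hxw, Or.inr hxw]
  · exact exists_adj_not_adj_of_closedNbhd_ssubset (n := 2) (by norm_num) hx hy hlt
  · obtain ⟨w, hw, hlt⟩ : ∃ w ∈ stage G 3, _ :=
      exists_mem_stage_succ_closedNbhd_ssubset (n := 2) (by norm_num) hz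
    have hzw : G.Adj z w := by
      refine adj_of_mem_closedNbhd (hlt.subset (self_mem_closedNbhd hz.1)) ?_
      rintro rfl
      exact (hS3 ▸ hw).2 hz
    refine ⟨w, hw, hzw, fun y hy hzy => ?_⟩
    rw [hS3, closedNbhd_diff] at *
    exact ⟨hlt.subset (mem_closedNbhd_of_adj hy.1 hzy.symm), hy.2⟩

theorem five_le_and_three_le_of_rRealizes_zero [Finite V] {c k : ℕ}
    (h : RRealizes G 0 [2, c, k, 1]) : 5 ≤ c ∧ (c ≤ 5 → 3 ≤ k) := by
  obtain ⟨⟨hcw, hrank, hcard⟩, htp⟩ := h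
  have hrank4 : graphRank G = (4 : ℕ) := by simpa using hrank
  have h4 : {v | cornerRank G v = (4 : ℕ)}.ncard = 2 := by
    simpa using (hcard ⟨0, by simp⟩).symm
  have h3 : {v | cornerRank G v = (3 : ℕ)}.ncard = c := by
    simpa using (hcard ⟨1, by simp⟩).symm
  have h2 : {v | cornerRank G v = (2 : ℕ)}.ncard = k := by
    simpa using (hcard ⟨2, by simp⟩).symm
  have h1 : {v | cornerRank G v = (1 : ℕ)}.ncard = 1 := by
    simpa using (hcard ⟨3, by simp⟩).symm
  obtain ⟨a, b, hab, hX4⟩ := Set.ncard_eq_two.1 h4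
  obtain ⟨u, hX1⟩ := Set.ncard_eq_one.1 h1
  have hmem4 : ∀ v ∈ ({a, b} : Set V), cornerRank G v = (4 : ℕ) := fun v hv => by
    rwa [← hX4] at hv
  have ha := hmem4 a (Set.mem_insert a {b})
  have hb := hmem4 b (Set.mem_insert_of_mem a rfl)
  have hX : ∀ n, 1 ≤ n → n ≤ 3 → corners G (stage G n) = {v | cornerRank G v = n} :=
    fun n hn hn3 => corners_stage_eq_setOf_cornerRank_eq hn fun m hm hmn =>
      not_isClique_stage_of_cornerRank_eq ha hm (by omega)
  have hS4 : stage G 4 = {a, b} :=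
    (stage_eq_setOf_cornerRank_eq hcw (fun v => hrank4 ▸ le_iSup _ v) ha).trans hX4
  obtain ⟨r, hcfg⟩ := exists_apexConfig ((hX 1 le_rfl (by norm_num)).trans hX1) hS4
    (adj_of_stage_eq_pair ha hab hS4)
  have hdom : ∀ v, cornerRank G v = (4 : ℕ) → ¬ Dominates G v (stage G 3) :=
    fun v hv hd => absurd (htp.1 ⟨4, by norm_num, hrank4, v, hv, hd⟩) (by norm_num)
  obtain ⟨q, hq, hqb⟩ := exists_notMem_closedNbhd_of_not_dominates (hdom b hb)
  obtain ⟨p, hp, hpa⟩ := exists_notMem_closedNbhd_of_not_dominates (hdom a ha)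
  have hC : stage G 3 \ {a, b} = corners G (stage G 3) := by
    rw [← hS4, show stage G 4 = _ from stage_succ (n := 3) (by norm_num),
      Set.sdiff_sdiff_cancel_left corners_subset]
  have := hcfg.five_le_and_three_le hq hqb hp hpa
  rwa [hC, hX 3 (by norm_num) le_rfl, hX 2 (by norm_num) (by norm_num), h3, h2] at this

end CopsRobbers

/-- for every `k ≥ 1`, the vector `(2, 4, k, 1)` is not 0-realizable,
and the vector `(2, 5, 2, 1)` is not 0-realizable. -/
theorem CopsRobbers.not_zero_realizable_24k1_2521 :
    (∀ k : ℕ, 1 ≤ k → ¬ CopsRobbers.RRealizable 0 [2, 4, k, 1]) ∧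
    ¬ CopsRobbers.RRealizable 0 [2, 5, 2, 1] := by
  refine ⟨fun k _ ⟨W, _, G, hG⟩ => ?_, fun ⟨W, _, G, hG⟩ => ?_⟩
  · have := (CopsRobbers.five_le_and_three_le_of_rRealizes_zero hG).1
    omega
  · have := (CopsRobbers.five_le_and_three_le_of_rRealizes_zero hG).2 le_rfl
    omega
end

section
/- For all positive integers m and k, the vector (m, 2, k, 1) is not 0-realizable: no tp0 cop-win graph has rank cardinality vector (m, 2, k, 1). -/
namespace CopsRobbers

variable {V : Type*} (G : SimpleGraph V)

lemma mem_closedNbhd {S : Set V} {u v : V} :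
    u ∈ closedNbhd G S v ↔ u ∈ S ∧ (u = v ∨ G.Adj u v) := Iff.rfl

lemma closedNbhd_inter {S T : Set V} (hTS : T ⊆ S) (v : V) :
    closedNbhd G T v = closedNbhd G S v ∩ T := by
  ext u
  constructor
  · rintro ⟨h1, h2⟩; exact ⟨⟨hTS h1, h2⟩, h1⟩
  · rintro ⟨⟨_, h2⟩, h3⟩; exact ⟨h3, h2⟩

/-- The condition at stage `n` in the definition of corner rank. -/
def rankCond (n : ℕ) (v : V) : Prop :=
  StrictCorner G (stage G n) v ∨ (G.IsClique (stage G n) ∧ v ∈ stage G n)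

lemma cornerRank_eq_sInf (v : V) :
    cornerRank G v = sInf {k : ℕ∞ | ∃ n : ℕ, k = (n : ℕ∞) ∧ 1 ≤ n ∧ rankCond G n v} := rfl

lemma cornerRank_le {n : ℕ} {v : V} (hn : 1 ≤ n) (h : rankCond G n v) :
    cornerRank G v ≤ (n : ℕ∞) :=
  sInf_le ⟨n, rfl, hn, h⟩

lemma rankCond_of_rank_eq {j : ℕ} {v : V} (h : cornerRank G v = (j : ℕ∞)) :
    1 ≤ j ∧ rankCond G j v := by
  have hne : {k : ℕ∞ | ∃ n : ℕ, k = (n : ℕ∞) ∧ 1 ≤ n ∧ rankCond G n v}.Nonempty := by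
    by_contra hc
    rw [Set.not_nonempty_iff_eq_empty] at hc
    rw [cornerRank_eq_sInf, hc, sInf_empty] at h
    exact ENat.coe_ne_top j h.symm
  have hmem := csInf_mem hne
  rw [← cornerRank_eq_sInf, h] at hmem
  obtain ⟨n, hn1, hn2, hn3⟩ := hmem
  obtain rfl : j = n := Nat.cast_inj.mp hn1
  exact ⟨hn2, hn3⟩

lemma le_cornerRank {n : ℕ} {v : V} (h : ∀ i, 1 ≤ i → i < n → ¬ rankCond G i v) :
    (n : ℕ∞) ≤ cornerRank G v := by
  refine le_sInf ?_
  rintro k ⟨i, rfl, hi1, hi2⟩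
  have hni : n ≤ i := by by_contra hc; exact h i hi1 (by omega) hi2
  exact_mod_cast hni

lemma exists_not_strictCorner {S : Set V} (hfin : S.Finite) (hne : S.Nonempty) :
    ∃ v ∈ S, ¬ StrictCorner G S v := by
  obtain ⟨v, hv, hmax⟩ := Set.exists_max_image S (fun v => (closedNbhd G S v).ncard) hfin hne
  refine ⟨v, hv, ?_⟩
  rintro ⟨-, w, hwS, hwv, hsub⟩
  have h1 : (closedNbhd G S v).ncard < (closedNbhd G S w).ncard :=
    Set.ncard_lt_ncard hsub (hfin.subset (fun u hu => hu.1))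
  have h2 := hmax w hwS
  omega

lemma witness {S T : Set V} (hTS : T = S \ {x | StrictCorner G S x})
    {v w : V} (hncv : ¬ StrictCorner G S v) (hvT : v ∈ T) (hwT : w ∈ T) (hwv : w ≠ v)
    (hsub : closedNbhd G T v ⊂ closedNbhd G T w) :
    ∃ z, StrictCorner G S z ∧ z ∈ closedNbhd G S v ∧ z ∉ closedNbhd G S w := by
  have hT_sub : T ⊆ S := by rw [hTS]; exact Set.diff_subset
  have hCNv := closedNbhd_inter G hT_sub v
  have hCNw := closedNbhd_inter G hT_sub w
  have hex : ∃ z, z ∈ closedNbhd G S v ∧ z ∉ closedNbhd G S w := by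
    by_contra hc
    push_neg at hc
    have hss : closedNbhd G S v ⊆ closedNbhd G S w := hc
    have hne : closedNbhd G S v ≠ closedNbhd G S w := by
      intro he
      apply hsub.ne
      rw [hCNv, hCNw, he]
    exact hncv ⟨hT_sub hvT, w, hT_sub hwT, hwv, hss.ssubset_of_ne hne⟩
  obtain ⟨z, hz1, hz2⟩ := hex
  refine ⟨z, ?_, hz1, hz2⟩
  have hzT : z ∉ T := by
    intro hzT
    apply hz2
    have hmem : z ∈ closedNbhd G T v := by rw [hCNv]; exact ⟨hz1, hzT⟩
    have hmem2 := hsub.subset hmem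
    rw [hCNw] at hmem2
    exact hmem2.1
  have hzS : z ∈ S := hz1.1
  rw [hTS] at hzT
  simp only [Set.mem_diff, Set.mem_setOf_eq, not_and, not_not] at hzT
  exact hzT hzS


lemma stage_succ_eq (n : ℕ) :
    stage G (n + 2) = stage G (n + 1) \ {x | StrictCorner G (stage G (n + 1)) x} := rfl

lemma stage_anti {i j : ℕ} (hi : 1 ≤ i) (hij : i ≤ j) : stage G j ⊆ stage G i := by
  revert hij
  induction j with
  | zero => intro hij; exact absurd (hi.trans hij) (by norm_num)
  | succ n ih =>
    intro hij
    rcases Nat.eq_or_lt_of_le hij with heq | hlt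
    · subst heq; exact subset_rfl
    · have hin : i ≤ n := by omega
      have hn1 : 1 ≤ n := le_trans hi hin
      obtain ⟨n', rfl⟩ : ∃ n', n = n' + 1 := ⟨n - 1, by omega⟩
      have hstep : stage G (n' + 1 + 1) ⊆ stage G (n' + 1) := by
        rw [stage_succ_eq]; exact Set.diff_subset
      exact hstep.trans (ih hin)

lemma not_mem_next {n : ℕ} {v : V} (h : StrictCorner G (stage G (n + 1)) v) :
    v ∉ stage G (n + 2) := by
  rw [stage_succ_eq]
  rintro ⟨-, h2⟩
  exact h2 h

end CopsRobbers

/-- for all positive `m`, `k`, the vector `(m, 2, k, 1)` is not 0-realizable. -/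
theorem CopsRobbers.not_zero_realizable_m2k1 (m k : ℕ) (hm : 1 ≤ m) (hk : 1 ≤ k) :
    ¬ CopsRobbers.RRealizable 0 [m, 2, k, 1] := by
  rintro ⟨W, instW, G, ⟨hCop, hlen, hcard⟩, hIff⟩
  haveI := instW
  have htp0 : ¬ Tp1 G := fun h => by simpa using hIff.mp h
  have hlen4 : graphRank G = ((4 : ℕ) : ℕ∞) := hlen
  have h4 : m = {v | cornerRank G v = ((4 : ℕ) : ℕ∞)}.ncard := hcard ⟨0, by norm_num⟩
  have h3 : 2 = {v | cornerRank G v = ((3 : ℕ) : ℕ∞)}.ncard := hcard ⟨1, by norm_num⟩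
  have h1 : 1 = {v | cornerRank G v = ((1 : ℕ) : ℕ∞)}.ncard := hcard ⟨3, by norm_num⟩
  obtain ⟨c, hc_eq⟩ := Set.ncard_eq_one.mp h1.symm
  obtain ⟨a, b, hab_ne, hab_eq⟩ := Set.ncard_eq_two.mp h3.symm
  obtain ⟨v4, hv4m⟩ : {v | cornerRank G v = ((4 : ℕ) : ℕ∞)}.Nonempty :=
    Set.nonempty_of_ncard_ne_zero (by omega)
  have hv4 : cornerRank G v4 = ((4 : ℕ) : ℕ∞) := hv4m
  have hrka : cornerRank G a = ((3 : ℕ) : ℕ∞) := by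
    have h : a ∈ {v | cornerRank G v = ((3 : ℕ) : ℕ∞)} := by
      rw [hab_eq]; exact Set.mem_insert a {b}
    exact h
  have hrkb : cornerRank G b = ((3 : ℕ) : ℕ∞) := by
    have h : b ∈ {v | cornerRank G v = ((3 : ℕ) : ℕ∞)} := by
      rw [hab_eq]; exact Set.mem_insert_iff.mpr (Or.inr rfl)
    exact h
  have hrkc : cornerRank G c = ((1 : ℕ) : ℕ∞) := by
    have h : c ∈ {v | cornerRank G v = ((1 : ℕ) : ℕ∞)} := by rw [hc_eq]; rfl
    exact h
  have huniq1 : ∀ z, cornerRank G z = ((1 : ℕ) : ℕ∞) → z = c := by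
    intro z hz
    have h : z ∈ ({c} : Set W) := by rw [← hc_eq]; exact hz
    exact h
  have huniq3 : ∀ z, cornerRank G z = ((3 : ℕ) : ℕ∞) → z = a ∨ z = b := by
    intro z hz
    have h : z ∈ ({a, b} : Set W) := by rw [← hab_eq]; exact hz
    exact h
  -- stage equations and inclusions
  have hS2eq : stage G 2 = stage G 1 \ {x | StrictCorner G (stage G 1) x} := rfl
  have hS3eq : stage G 3 = stage G 2 \ {x | StrictCorner G (stage G 2) x} := rfl
  have hS4eq : stage G 4 = stage G 3 \ {x | StrictCorner G (stage G 3) x} := rfl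
  have hsub43 : stage G 4 ⊆ stage G 3 := stage_anti G (by omega) (by omega)
  have hsub32 : stage G 3 ⊆ stage G 2 := stage_anti G (by omega) (by omega)
  have hsub42 : stage G 4 ⊆ stage G 2 := stage_anti G (by omega) (by omega)
  -- rank bounds
  have hrank_le4 : ∀ v, cornerRank G v ≤ ((4 : ℕ) : ℕ∞) := fun v =>
    hlen4 ▸ le_iSup (cornerRank G) v
  have hv4mem : v4 ∈ stage G 4 := by
    rcases (rankCond_of_rank_eq G hv4).2 with hcor | hcl
    · exact hcor.1
    · exact hcl.2
  have hncliq : ∀ j, 1 ≤ j → j ≤ 3 → ¬ G.IsClique (stage G j) := by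
    intro j hj1 hj3 hcl
    have hv4j : v4 ∈ stage G j := stage_anti G hj1 (by omega) hv4mem
    have hle := cornerRank_le G hj1 (Or.inr ⟨hcl, hv4j⟩)
    rw [hv4] at hle
    have h43 : (4 : ℕ) ≤ j := Nat.cast_le.mp hle
    omega
  have hrank_ge : ∀ j, 1 ≤ j → j ≤ 4 → ∀ v, v ∈ stage G j →
      ((j : ℕ) : ℕ∞) ≤ cornerRank G v := by
    intro j hj1 hj4 v hv
    apply le_cornerRank
    intro i hi1 hij hcond
    rcases hcond with hcor | hcl
    · obtain ⟨i', rfl⟩ : ∃ i', i = i' + 1 := ⟨i - 1, by omega⟩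
      exact not_mem_next G hcor (stage_anti G (by omega) (by omega) hv)
    · exact hncliq i hi1 (by omega) hcl.1
  have hrank_of_corner : ∀ j, 1 ≤ j → j ≤ 3 → ∀ v, StrictCorner G (stage G j) v →
      cornerRank G v = ((j : ℕ) : ℕ∞) := fun j hj1 hj3 v h =>
    le_antisymm (cornerRank_le G hj1 (Or.inl h)) (hrank_ge j hj1 (by omega) v h.1)
  have hcorner_of_rank : ∀ j, 1 ≤ j → j ≤ 3 → ∀ v, cornerRank G v = ((j : ℕ) : ℕ∞) →
      StrictCorner G (stage G j) v := by
    intro j hj1 hj3 v h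
    rcases (rankCond_of_rank_eq G h).2 with hcor | hcl
    · exact hcor
    · exact absurd hcl.1 (hncliq j hj1 hj3)
  have hrk4mem : ∀ v ∈ stage G 4, cornerRank G v = ((4 : ℕ) : ℕ∞) := fun v hv =>
    le_antisymm (hrank_le4 v) (hrank_ge 4 (by omega) (by omega) v hv)
  -- stage case analyses
  have hS3cases : ∀ v ∈ stage G 3, v ∈ stage G 4 ∨ v = a ∨ v = b := by
    intro v hv
    by_cases h4m : v ∈ stage G 4
    · exact Or.inl h4m
    · right
      have hcor : StrictCorner G (stage G 3) v := by
        by_contra hnc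
        exact h4m (by rw [hS4eq]; exact ⟨hv, hnc⟩)
      exact huniq3 v (hrank_of_corner 3 (by omega) (by omega) v hcor)
  have hS2cases : ∀ v ∈ stage G 2, v ∈ stage G 3 ∨ cornerRank G v = ((2 : ℕ) : ℕ∞) := by
    intro v hv
    by_cases h3m : v ∈ stage G 3
    · exact Or.inl h3m
    · right
      have hcor : StrictCorner G (stage G 2) v := by
        by_contra hnc
        exact h3m (by rw [hS3eq]; exact ⟨hv, hnc⟩)
      exact hrank_of_corner 2 (by omega) (by omega) v hcor
  -- S4 is a clique
  have hcl4 : G.IsClique (stage G 4) := by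
    by_contra hncl
    obtain ⟨v, hv, hnc⟩ := exists_not_strictCorner G (Set.toFinite _) ⟨v4, hv4mem⟩
    rcases (rankCond_of_rank_eq G (hrk4mem v hv)).2 with hcor | hcl
    · exact hnc hcor
    · exact hncl hcl.1
  -- corner data for a and b
  obtain ⟨haS3, wa, hwaS3, hwa_ne, hsuba⟩ := hcorner_of_rank 3 (by omega) (by omega) a hrka
  obtain ⟨hbS3, wb, hwbS3, hwb_ne, hsubb⟩ := hcorner_of_rank 3 (by omega) (by omega) b hrkb
  have hadj_awa : G.Adj a wa := by
    have haCN : a ∈ closedNbhd G (stage G 3) wa := hsuba.subset ⟨haS3, Or.inl rfl⟩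
    rcases haCN.2 with h | h
    · exact absurd h.symm hwa_ne
    · exact h
  have hadj_bwb : G.Adj b wb := by
    have hbCN : b ∈ closedNbhd G (stage G 3) wb := hsubb.subset ⟨hbS3, Or.inl rfl⟩
    rcases hbCN.2 with h | h
    · exact absurd h.symm hwb_ne
    · exact h
  have haS4 : a ∉ stage G 4 := by
    intro h
    have h' := hrk4mem a h
    rw [hrka] at h'
    exact absurd (Nat.cast_inj.mp h') (by omega)
  have hbS4 : b ∉ stage G 4 := by
    intro h
    have h' := hrk4mem b h
    rw [hrkb] at h'
    exact absurd (Nat.cast_inj.mp h') (by omega)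
  -- tp0: no rank-4 vertex dominates stage 3
  have no_dom : ∀ q, cornerRank G q = ((4 : ℕ) : ℕ∞) → ¬ Dominates G q (stage G 3) := by
    intro q hq hd
    exact htp0 ⟨4, by omega, hlen4, q, hq, hd⟩
  have domhelp : ∀ w ∈ stage G 4, G.Adj w a → G.Adj w b → False := by
    intro w hw hwa hwb
    apply no_dom w (hrk4mem w hw)
    intro u hu
    rcases hS3cases u hu with h4m | rfl | rfl
    · by_cases he : u = w
      · exact Or.inl he
      · exact Or.inr (hcl4 hw h4m (fun hx => he hx.symm))
    · exact Or.inr hwa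
    · exact Or.inr hwb
  -- a and b are not adjacent
  have hnadj : ¬ G.Adj a b := by
    intro hadj
    rcases hS3cases wa hwaS3 with hwa4 | hwaa | hwab
    · have h2 : G.Adj wa b := by
        have hbCN : b ∈ closedNbhd G (stage G 3) wa := hsuba.subset ⟨hbS3, Or.inr hadj.symm⟩
        rcases hbCN.2 with h | h
        · exact absurd (h ▸ hwa4) hbS4
        · exact h.symm
      exact domhelp wa hwa4 hadj_awa.symm h2
    · exact hwa_ne hwaa
    · -- wa = b, so CN3 a ⊂ CN3 b; locate wb
      rcases hS3cases wb hwbS3 with hwb4 | hwba | hwbb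
      · have h2 : G.Adj wb a := by
          have haCN : a ∈ closedNbhd G (stage G 3) wb := hsubb.subset ⟨haS3, Or.inr hadj⟩
          rcases haCN.2 with h | h
          · exact absurd (h ▸ hwb4) haS4
          · exact h.symm
        exact domhelp wb hwb4 h2 hadj_bwb.symm
      · -- wb = a: two strict inclusions
        rw [hwab] at hsuba
        rw [hwba] at hsubb
        exact hsubb.not_subset hsuba.subset
      · exact hwb_ne hwbb
  have hwa4 : wa ∈ stage G 4 := by
    rcases hS3cases wa hwaS3 with h | h | h
    · exact h
    · exact absurd h hwa_ne
    · rw [h] at hadj_awa; exact absurd hadj_awa hnadj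
  have hwb4 : wb ∈ stage G 4 := by
    rcases hS3cases wb hwbS3 with h | h | h
    · exact h
    · rw [h] at hadj_bwb; exact absurd hadj_bwb.symm hnadj
    · exact absurd h hwb_ne
  -- partition of the top clique
  have hpart : ∀ q ∈ stage G 4, G.Adj q a ∨ G.Adj q b := by
    intro q hq
    by_contra hcon
    push_neg at hcon
    obtain ⟨hqa, hqb⟩ := hcon
    have hcor : StrictCorner G (stage G 3) q := by
      refine ⟨hsub43 hq, wa, hwaS3, ?_, HasSubset.Subset.ssubset_of_ne ?_ ?_⟩
      · intro he
        rw [he] at hadj_awa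
        exact hqa hadj_awa.symm
      · intro u hu
        obtain ⟨huS3, hu2⟩ := hu
        refine ⟨huS3, ?_⟩
        rcases hS3cases u huS3 with h4 | rfl | rfl
        · by_cases he : u = wa
          · exact Or.inl he
          · exact Or.inr (hcl4 h4 hwa4 he)
        · exfalso
          rcases hu2 with h | h
          · exact haS4 (h ▸ hq)
          · exact hqa h.symm
        · exfalso
          rcases hu2 with h | h
          · exact hbS4 (h ▸ hq)
          · exact hqb h.symm
      · intro he
        have haCN : a ∈ closedNbhd G (stage G 3) wa := ⟨haS3, Or.inr hadj_awa⟩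
        rw [← he] at haCN
        rcases haCN.2 with h | h
        · exact haS4 (h ▸ hq)
        · exact hqa h.symm
    have h' := hrank_of_corner 3 (by omega) (by omega) q hcor
    rw [hrk4mem q hq] at h'
    exact absurd (Nat.cast_inj.mp h') (by omega)
  have hnboth : ∀ q ∈ stage G 4, ¬ (G.Adj q a ∧ G.Adj q b) := by
    rintro q hq ⟨h1, h2⟩
    exact domhelp q hq h1 h2
  -- rank-2 vertices: adjacency to c, cornerers avoid c
  have hc_adj : ∀ u w, cornerRank G u = ((2 : ℕ) : ℕ∞) → w ∈ stage G 2 → w ≠ u →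
      closedNbhd G (stage G 2) u ⊂ closedNbhd G (stage G 2) w →
      G.Adj c u ∧ c ≠ w ∧ ¬ G.Adj c w := by
    intro u w hu hw hne hsub
    have hnc1 : ¬ StrictCorner G (stage G 1) u := by
      intro h
      have h' := hrank_of_corner 1 (by omega) (by omega) u h
      rw [hu] at h'
      exact absurd (Nat.cast_inj.mp h') (by omega)
    have huS2 : u ∈ stage G 2 := (hcorner_of_rank 2 (by omega) (by omega) u hu).1
    obtain ⟨z, hzc, hz1, hz2⟩ := witness G hS2eq hnc1 huS2 hw hne hsub
    have hz_eq : z = c := huniq1 z (hrank_of_corner 1 (by omega) (by omega) z hzc)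
    subst hz_eq
    refine ⟨?_, ?_, ?_⟩
    · rcases hz1.2 with h | h
      · exfalso
        rw [h] at hrkc
        rw [hu] at hrkc
        exact absurd (Nat.cast_inj.mp hrkc) (by omega)
      · exact h
    · intro he
      exact hz2 ⟨Set.mem_univ z, Or.inl he⟩
    · intro hadj
      exact hz2 ⟨Set.mem_univ z, Or.inr hadj⟩
  have hcadj_all : ∀ u, cornerRank G u = ((2 : ℕ) : ℕ∞) → G.Adj c u := by
    intro u hu
    obtain ⟨huS2, w, hw, hne, hsub⟩ := hcorner_of_rank 2 (by omega) (by omega) u hu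
    exact (hc_adj u w hu hw hne hsub).1
  have hrank2_ne_S3 : ∀ w ∈ stage G 3, cornerRank G w ≠ ((2 : ℕ) : ℕ∞) := by
    intro w hw h2'
    have hcor := hcorner_of_rank 2 (by omega) (by omega) w h2'
    rw [hS3eq] at hw
    exact hw.2 hcor
  -- every rank-2 vertex has a cornerer in stage 3
  have hloc : ∀ u, cornerRank G u = ((2 : ℕ) : ℕ∞) → ∃ w ∈ stage G 3, w ≠ u ∧
      closedNbhd G (stage G 2) u ⊂ closedNbhd G (stage G 2) w := by
    intro u hu
    obtain ⟨huS2, w, hw, hne, hsub⟩ := hcorner_of_rank 2 (by omega) (by omega) u hu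
    obtain ⟨-, hcne, hcnadj⟩ := hc_adj u w hu hw hne hsub
    rcases hS2cases w hw with h3m | h2'
    · exact ⟨w, h3m, hne, hsub⟩
    · exact absurd (hcadj_all w h2') hcnadj
  -- rank-3 vertices have a rank-2 neighbor
  have hwit : ∀ y, cornerRank G y = ((3 : ℕ) : ℕ∞) → ∀ wy, wy ∈ stage G 3 → wy ≠ y →
      closedNbhd G (stage G 3) y ⊂ closedNbhd G (stage G 3) wy →
      ∃ u, cornerRank G u = ((2 : ℕ) : ℕ∞) ∧ G.Adj u y := by
    intro y hy wy hwyS3 hne hsub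
    have hnc2 : ¬ StrictCorner G (stage G 2) y := by
      intro h
      have h' := hrank_of_corner 2 (by omega) (by omega) y h
      rw [hy] at h'
      exact absurd (Nat.cast_inj.mp h') (by omega)
    have hyS3 : y ∈ stage G 3 := (hcorner_of_rank 3 (by omega) (by omega) y hy).1
    obtain ⟨z, hzc, hz1, hz2⟩ := witness G hS3eq hnc2 hyS3 hwyS3 hne hsub
    have hz2rk : cornerRank G z = ((2 : ℕ) : ℕ∞) :=
      hrank_of_corner 2 (by omega) (by omega) z hzc
    refine ⟨z, hz2rk, ?_⟩
    rcases hz1.2 with h | h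
    · exfalso
      rw [h, hy] at hz2rk
      exact absurd (Nat.cast_inj.mp hz2rk) (by omega)
    · exact h
  -- a vertex of stage 3 adjacent to all rank-2 vertices
  obtain ⟨Wv, hWS3, hWadj⟩ : ∃ Wv ∈ stage G 3,
      ∀ u, cornerRank G u = ((2 : ℕ) : ℕ∞) → G.Adj u Wv := by
    obtain ⟨-, wc, -, hwc_ne, hsubc⟩ := hcorner_of_rank 1 (by omega) (by omega) c hrkc
    have hX2CNwc : ∀ u, cornerRank G u = ((2 : ℕ) : ℕ∞) →
        u ∈ closedNbhd G (stage G 1) wc := by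
      intro u hu
      exact hsubc.subset ⟨Set.mem_univ u, Or.inr (hcadj_all u hu).symm⟩
    have hwcS2 : wc ∈ stage G 2 := by
      rw [hS2eq]
      refine ⟨Set.mem_univ wc, ?_⟩
      intro hcor
      exact hwc_ne (huniq1 wc (hrank_of_corner 1 (by omega) (by omega) wc hcor))
    rcases hS2cases wc hwcS2 with h3m | h2'
    · refine ⟨wc, h3m, fun u hu => ?_⟩
      rcases (hX2CNwc u hu).2 with h | h
      · exact absurd (h ▸ hu) (hrank2_ne_S3 wc h3m)
      · exact h
    · obtain ⟨w', hw'S3, hw'ne, hsub'⟩ := hloc wc h2'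
      refine ⟨w', hw'S3, fun u hu => ?_⟩
      have huS2 : u ∈ stage G 2 := (hcorner_of_rank 2 (by omega) (by omega) u hu).1
      have hu2 : u ∈ closedNbhd G (stage G 2) wc := ⟨huS2, (hX2CNwc u hu).2⟩
      rcases (hsub'.subset hu2).2 with h | h
      · exact absurd (h ▸ hu) (hrank2_ne_S3 w' hw'S3)
      · exact h
  -- the symmetric core contradiction
  have core : ∀ a' b' wb' : W, cornerRank G a' = ((3 : ℕ) : ℕ∞) →
      a' ∈ stage G 3 → b' ∈ stage G 3 → a' ∉ stage G 4 → b' ∉ stage G 4 →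
      a' ≠ b' → ¬ G.Adj a' b' →
      wb' ∈ stage G 4 → G.Adj wb' b' →
      (∀ v ∈ stage G 3, v ∈ stage G 4 ∨ v = a' ∨ v = b') →
      (∀ q ∈ stage G 4, ¬ (G.Adj q a' ∧ G.Adj q b')) →
      (∃ u, cornerRank G u = ((2 : ℕ) : ℕ∞) ∧ G.Adj u b') →
      (Wv = a' ∨ (Wv ∈ stage G 4 ∧ G.Adj Wv a')) → False := by
    intro a' b' wb' hra haS3' hbS3' haS4' hbS4' hne' hnadj' hwb4' hadjwb hS3c hnboth' hub hWcase
    rcases hWcase with rfl | ⟨hW4, hWa⟩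
    · -- Wv = a'
      obtain ⟨ub, hub2, hub_adj⟩ := hub
      obtain ⟨w'', hw''S3, hw''ne, hsub''⟩ := hloc ub hub2
      have hbmem : b' ∈ closedNbhd G (stage G 2) ub := ⟨hsub32 hbS3', Or.inr hub_adj.symm⟩
      have hb2 := (hsub''.subset hbmem).2
      have hamem : Wv ∈ closedNbhd G (stage G 2) ub :=
        ⟨hsub32 haS3', Or.inr (hWadj ub hub2).symm⟩
      have ha2 := (hsub''.subset hamem).2
      rcases hS3c w'' hw''S3 with h4 | rfl | rfl
      · have hba : G.Adj w'' b' := by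
          rcases hb2 with h | h
          · exact absurd (h ▸ h4) hbS4'
          · exact h.symm
        have haa : G.Adj w'' Wv := by
          rcases ha2 with h | h
          · exact absurd (h ▸ h4) haS4'
          · exact h.symm
        exact hnboth' w'' h4 ⟨haa, hba⟩
      · rcases hb2 with h | h
        · exact hne' h.symm
        · exact hnadj' h.symm
      · rcases ha2 with h | h
        · exact hne' h
        · exact hnadj' h
    · -- Wv ∈ stage 4 with Adj Wv a'
      have hcor : StrictCorner G (stage G 2) a' := by
        refine ⟨hsub32 haS3', Wv, hsub42 hW4, ?_, HasSubset.Subset.ssubset_of_ne ?_ ?_⟩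
        · intro he
          exact haS4' (he ▸ hW4)
        · intro u hu
          obtain ⟨huS2, hu2⟩ := hu
          refine ⟨huS2, ?_⟩
          rcases hS2cases u huS2 with h3m | h2'
          · rcases hS3c u h3m with h4 | rfl | rfl
            · by_cases he : u = Wv
              · exact Or.inl he
              · exact Or.inr (hcl4 h4 hW4 he)
            · exact Or.inr hWa.symm
            · exfalso
              rcases hu2 with h | h
              · exact hne' h.symm
              · exact hnadj' h.symm
          · exact Or.inr (hWadj u h2')
        · intro he
          have hwbmem : wb' ∈ closedNbhd G (stage G 2) Wv := by
            refine ⟨hsub42 hwb4', ?_⟩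
            by_cases h : wb' = Wv
            · exact Or.inl h
            · exact Or.inr (hcl4 hwb4' hW4 h)
          rw [← he] at hwbmem
          rcases hwbmem.2 with h | h
          · exact haS4' (h ▸ hwb4')
          · exact hnboth' wb' hwb4' ⟨h, hadjwb⟩
      have h' := hrank_of_corner 2 (by omega) (by omega) a' hcor
      rw [hra] at h'
      exact absurd (Nat.cast_inj.mp h') (by omega)
  -- finale
  have hub : ∃ u, cornerRank G u = ((2 : ℕ) : ℕ∞) ∧ G.Adj u b :=
    hwit b hrkb wb hwbS3 hwb_ne hsubb
  have hua : ∃ u, cornerRank G u = ((2 : ℕ) : ℕ∞) ∧ G.Adj u a :=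
    hwit a hrka wa hwaS3 hwa_ne hsuba
  have hS3c' : ∀ v ∈ stage G 3, v ∈ stage G 4 ∨ v = b ∨ v = a := by
    intro v hv
    rcases hS3cases v hv with h | h | h
    · exact Or.inl h
    · exact Or.inr (Or.inr h)
    · exact Or.inr (Or.inl h)
  have hnboth2 : ∀ q ∈ stage G 4, ¬ (G.Adj q b ∧ G.Adj q a) := by
    rintro q hq ⟨h1, h2⟩
    exact domhelp q hq h2 h1
  have hnadj' : ¬ G.Adj b a := fun h => hnadj h.symm
  rcases hS3cases Wv hWS3 with h4 | hWva | hWvb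
  · rcases hpart Wv h4 with hWa | hWb
    · exact core a b wb hrka haS3 hbS3 haS4 hbS4 hab_ne hnadj hwb4 hadj_bwb.symm
        hS3cases hnboth hub (Or.inr ⟨h4, hWa⟩)
    · exact core b a wa hrkb hbS3 haS3 hbS4 haS4 hab_ne.symm hnadj' hwa4 hadj_awa.symm
        hS3c' hnboth2 hua (Or.inr ⟨h4, hWb⟩)
  · exact core a b wb hrka haS3 hbS3 haS4 hbS4 hab_ne hnadj hwb4 hadj_bwb.symm
      hS3cases hnboth hub (Or.inl hWva)
  · exact core b a wa hrkb hbS3 haS3 hbS4 haS4 hab_ne.symm hnadj' hwa4 hadj_awa.symm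
      hS3c' hnboth2 hua (Or.inl hWvb)
end
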